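/- Let (X,T) be a topological dynamical system and μ an ergodic T-invariant Borel probability measure on X. Then (X,T) is μ-mean sensitive if and only if it is μ-logarithmically mean sensitive. -/

import Mathlib

open Filter MeasureTheory Topology

/-- The `n`-th harmonic number `H_n = ∑_{k=1}^n 1/k` as a real number. -/
noncomputable def H (n : ℕ) : ℝ := ∑ k ∈ Finset.range n, (1 : ℝ) / (k + 1)

/-- A Borel probability measure `μ` is `T`-invariant if `μ(T⁻¹B) = μ(B)` for every Borel set. -/
def IsInvariantMeasure {X : Type*} [MetricSpace X] [MeasurableSpace X]
    (T : X → X) (μ : ProbabilityMeasure X) : Prop :=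
  ∀ B : Set X, MeasurableSet B → μ (T ⁻¹' B) = μ B

/-- A `T`-invariant Borel probability measure `μ` is ergodic if every Borel set `B` with
`T⁻¹B = B` satisfies `μ(B) ∈ {0,1}`. -/
def IsErgodicMeasure {X : Type*} [MetricSpace X] [MeasurableSpace X]
    (T : X → X) (μ : ProbabilityMeasure X) : Prop :=
  IsInvariantMeasure T μ ∧
    ∀ B : Set X, MeasurableSet B → T ⁻¹' B = B → μ B = 0 ∨ μ B = 1

/-- `(X,T)` is `μ`-mean sensitive if there is `ε > 0` such that every Borel set `B` of positive
measure contains `x, y` with `limsup_n (1/n) ∑_{k=1}^n d(T^{k-1}x, T^{k-1}y) ≥ ε`. -/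
def MuMeanSensitive {X : Type*} [MetricSpace X] [MeasurableSpace X]
    (T : X → X) (μ : ProbabilityMeasure X) : Prop :=
  ∃ ε > (0 : ℝ), ∀ B : Set X, MeasurableSet B → 0 < μ B →
    ∃ x ∈ B, ∃ y ∈ B,
      ε ≤ limsup (fun n : ℕ =>
        (1 / (n : ℝ)) * ∑ k ∈ Finset.range n, dist (T^[k] x) (T^[k] y)) atTop

/-- `(X,T)` is `μ`-logarithmically mean sensitive if there is `ε > 0` such that every Borel set
`B` of positive measure contains `x, y` with
`limsup_n (1/H_n) ∑_{k=1}^n (1/k) d(T^{k-1}x, T^{k-1}y) ≥ ε`. -/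
def MuLogMeanSensitive {X : Type*} [MetricSpace X] [MeasurableSpace X]
    (T : X → X) (μ : ProbabilityMeasure X) : Prop :=
  ∃ ε > (0 : ℝ), ∀ B : Set X, MeasurableSet B → 0 < μ B →
    ∃ x ∈ B, ∃ y ∈ B,
      ε ≤ limsup (fun n : ℕ =>
        (1 / H n) * ∑ k ∈ Finset.range n, (1 / (k + 1 : ℝ)) * dist (T^[k] x) (T^[k] y)) atTop

/-!
By Birkhoff's pointwise ergodic theorem for `T × T` and the bounded observable `(x, y) ↦ d(x, y)`,
the Cesàro averages of `d(T^k x, T^k y)` converge for `μ ⊗ μ`-almost every pair `(x, y)`, and by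
Abel summation the logarithmic averages then converge to the same limit. Hence the two upper mean
distances are pseudometrics that agree `μ ⊗ μ`-almost everywhere, and sensitivity with respect to
such pseudometrics is the same.
-/

section LimsupOfTendstoSub

variable {ι : Type*} {F : Filter ι} {u v : ι → ℝ} {C : ℝ}

lemma isBoundedUnder_le_of_abs_le (hu : ∀ i, |u i| ≤ C) : F.IsBoundedUnder (· ≤ ·) u :=
  isBoundedUnder_of ⟨C, fun i => (abs_le.1 (hu i)).2⟩

lemma isBoundedUnder_ge_of_abs_le (hu : ∀ i, |u i| ≤ C) : F.IsBoundedUnder (· ≥ ·) u :=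
  isBoundedUnder_of ⟨-C, fun i => (abs_le.1 (hu i)).1⟩

variable [F.NeBot]

lemma limsup_le_limsup_of_tendsto_sub (hv : ∀ i, |v i| ≤ C)
    (h : Tendsto (u - v) F (𝓝 0)) : limsup u F ≤ limsup v F := by
  calc limsup u F = limsup (v + (u - v)) F := by rw [add_sub_cancel]
    _ ≤ limsup v F + limsup (u - v) F :=
        limsup_add_le (isBoundedUnder_ge_of_abs_le hv) (isBoundedUnder_le_of_abs_le hv)
          h.isBoundedUnder_ge.isCoboundedUnder_le h.isBoundedUnder_le
    _ = limsup v F := by rw [h.limsup_eq, add_zero]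

lemma liminf_le_liminf_of_tendsto_sub (hu : ∀ i, |u i| ≤ C)
    (h : Tendsto (u - v) F (𝓝 0)) : liminf u F ≤ liminf v F := by
  have h' : Tendsto (v - u) F (𝓝 0) := by rw [← neg_sub, ← neg_zero]; exact h.neg
  calc liminf u F = liminf u F + liminf (v - u) F := by rw [h'.liminf_eq, add_zero]
    _ ≤ liminf (u + (v - u)) F :=
        le_liminf_add (isBoundedUnder_ge_of_abs_le hu) (isBoundedUnder_le_of_abs_le hu)
          h'.isBoundedUnder_ge h'.isBoundedUnder_le.isCoboundedUnder_ge
    _ = liminf v F := by rw [add_sub_cancel]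

lemma limsup_eq_limsup_of_tendsto_sub (hu : ∀ i, |u i| ≤ C) (hv : ∀ i, |v i| ≤ C)
    (h : Tendsto (u - v) F (𝓝 0)) : limsup u F = limsup v F :=
  (limsup_le_limsup_of_tendsto_sub hv h).antisymm
    (limsup_le_limsup_of_tendsto_sub hu (by rw [← neg_sub, ← neg_zero]; exact h.neg))

lemma liminf_eq_liminf_of_tendsto_sub (hu : ∀ i, |u i| ≤ C) (hv : ∀ i, |v i| ≤ C)
    (h : Tendsto (u - v) F (𝓝 0)) : liminf u F = liminf v F :=
  (liminf_le_liminf_of_tendsto_sub hu h).antisymm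
    (liminf_le_liminf_of_tendsto_sub hv (by rw [← neg_sub, ← neg_zero]; exact h.neg))

end LimsupOfTendstoSub

section BirkhoffMax

variable {Ω : Type*} {S : Ω → Ω} {f : Ω → ℝ}

/-- `birkhoffMax S f N ω = max_{n ≤ N} birkhoffSum S f n ω`, via `M_{N+1} = max (f + M_N ∘ S) 0`. -/
noncomputable def birkhoffMax (S : Ω → Ω) (f : Ω → ℝ) : ℕ → Ω → ℝ
  | 0 => fun _ => 0
  | N + 1 => fun ω => max (f ω + birkhoffMax S f N (S ω)) 0

lemma birkhoffMax_nonneg (N : ℕ) (ω : Ω) : 0 ≤ birkhoffMax S f N ω := by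
  cases N
  · exact le_rfl
  · exact le_max_right _ _

lemma birkhoffMax_mono (ω : Ω) : Monotone (birkhoffMax S f · ω) := by
  refine monotone_nat_of_le_succ fun N => ?_
  induction N generalizing ω with
  | zero => exact birkhoffMax_nonneg 1 ω
  | succ N ih => exact max_le_max (add_le_add_right (ih (S ω)) _) le_rfl

lemma birkhoffSum_le_birkhoffMax {n N : ℕ} (h : n ≤ N) (ω : Ω) :
    birkhoffSum S f n ω ≤ birkhoffMax S f N ω := by
  induction n generalizing N ω with
  | zero => exact birkhoffMax_nonneg N ω
  | succ n ih =>
    obtain ⟨N, rfl⟩ := Nat.exists_eq_add_of_lt h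
    rw [birkhoffSum_succ']
    exact (add_le_add_right (ih (by omega) (S ω)) _).trans (le_max_left _ _)

variable [MeasurableSpace Ω] {ν : Measure Ω}

lemma measurable_birkhoffMax (hS : Measurable S) (hf : Measurable f) (N : ℕ) :
    Measurable (birkhoffMax S f N) := by
  induction N with
  | zero => exact measurable_const
  | succ N ih => exact (hf.add (ih.comp hS)).max measurable_const

lemma integrable_birkhoffMax (hS : MeasurePreserving S ν ν) (hf : Integrable f ν) (N : ℕ) :
    Integrable (birkhoffMax S f N) ν := by
  induction N with
  | zero => exact integrable_zero _ _ _
  | succ N ih => exact (hf.add (hS.integrable_comp_of_integrable ih)).pos_part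

/-- The maximal ergodic lemma. -/
lemma setIntegral_pos_birkhoffMax_nonneg (hS : MeasurePreserving S ν ν) (hf : Measurable f)
    (hfi : Integrable f ν) (N : ℕ) :
    0 ≤ ∫ ω in {ω | 0 < birkhoffMax S f (N + 1) ω}, f ω ∂ν := by
  set Q := birkhoffMax S f (N + 1)
  set E := {ω | 0 < Q ω}
  have hE : MeasurableSet E :=
    measurableSet_lt measurable_const (measurable_birkhoffMax hS.measurable hf _)
  have hQ : Integrable Q ν := integrable_birkhoffMax hS hfi _
  have hQS : Integrable (Q ∘ S) ν := hS.integrable_comp_of_integrable hQ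
  -- on `E` the maximum is attained at a positive time, so `Q ≤ f + Q ∘ S` there
  have hQ_le : ∀ ω ∈ E, Q ω - Q (S ω) ≤ f ω := by
    intro ω hω
    have hpos : 0 < f ω + birkhoffMax S f N (S ω) :=
      (lt_max_iff.1 (show 0 < Q ω from hω)).resolve_right (lt_irrefl 0)
    have hQω : Q ω = f ω + birkhoffMax S f N (S ω) := max_eq_left hpos.le
    have := birkhoffMax_mono (S := S) (f := f) (S ω) N.le_succ
    linarith
  calc (0 : ℝ) = ∫ ω, Q ω ∂ν - ∫ ω, Q (S ω) ∂ν := by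
        rw [← integral_map hS.aemeasurable (by rw [hS.map_eq]; exact hQ.aestronglyMeasurable),
          hS.map_eq, sub_self]
    _ ≤ ∫ ω in E, Q ω ∂ν - ∫ ω in E, Q (S ω) ∂ν := by
        rw [setIntegral_eq_integral_of_forall_compl_eq_zero (s := E) fun ω hω =>
          le_antisymm (not_lt.1 hω) (birkhoffMax_nonneg _ ω)]
        exact sub_le_sub_left
          (setIntegral_le_integral hQS (ae_of_all _ fun ω => birkhoffMax_nonneg _ (S ω))) _
    _ = ∫ ω in E, (Q ω - Q (S ω)) ∂ν := (integral_sub hQ.integrableOn hQS.integrableOn).symm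
    _ ≤ ∫ ω in E, f ω ∂ν :=
        setIntegral_mono_on (hQ.sub hQS).integrableOn hfi.integrableOn hE hQ_le

lemma integral_nonneg_of_ae_exists_birkhoffSum_pos (hS : MeasurePreserving S ν ν)
    (hf : Measurable f) (hfi : Integrable f ν) (h : ∀ᵐ ω ∂ν, ∃ n, 0 < birkhoffSum S f n ω) :
    0 ≤ ∫ ω, f ω ∂ν := by
  set E := fun N : ℕ => {ω | 0 < birkhoffMax S f (N + 1) ω}
  have hEm : ∀ N, MeasurableSet (E N) := fun N =>
    measurableSet_lt measurable_const (measurable_birkhoffMax hS.measurable hf _)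
  have hE_mono : Monotone E := fun i j hij ω hω =>
    hω.trans_le (birkhoffMax_mono ω (by omega))
  have hE_univ : (⋃ N, E N) =ᵐ[ν] (Set.univ : Set Ω) := by
    refine eventuallyEq_set.2 (h.mono fun ω ⟨n, hn⟩ => ?_)
    simpa using ⟨n, hn.trans_le (birkhoffSum_le_birkhoffMax n.le_succ ω)⟩
  have hlim := tendsto_setIntegral_of_monotone hEm hE_mono hfi.integrableOn
  rw [setIntegral_congr_set hE_univ, setIntegral_univ] at hlim
  exact ge_of_tendsto' hlim fun N => setIntegral_pos_birkhoffMax_nonneg hS hf hfi N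

end BirkhoffMax

section PointwiseErgodic

variable {Ω : Type*} {S : Ω → Ω} {f : Ω → ℝ} {C : ℝ}

lemma abs_birkhoffAverage_le (hC : ∀ ω, |f ω| ≤ C) (n : ℕ) (ω : Ω) :
    |birkhoffAverage ℝ S f n ω| ≤ C := by
  rcases n.eq_zero_or_pos with rfl | hn
  · simpa using (abs_nonneg _).trans (hC ω)
  calc |birkhoffAverage ℝ S f n ω| = (n : ℝ)⁻¹ * |birkhoffSum S f n ω| := by
        rw [birkhoffAverage, smul_eq_mul, abs_mul, abs_inv, Nat.abs_cast]
    _ ≤ (n : ℝ)⁻¹ * (n * C) := by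
        gcongr
        exact (Finset.abs_sum_le_sum_abs _ _).trans
          ((Finset.sum_le_sum fun k _ => hC (S^[k] ω)).trans_eq (by simp))
    _ = C := by field_simp

lemma limsup_birkhoffAverage_apply (hC : ∀ ω, |f ω| ≤ C) (ω : Ω) :
    limsup (birkhoffAverage ℝ S f · (S ω)) atTop = limsup (birkhoffAverage ℝ S f · ω) atTop :=
  limsup_eq_limsup_of_tendsto_sub (abs_birkhoffAverage_le hC · _) (abs_birkhoffAverage_le hC · _)
    (tendsto_birkhoffAverage_apply_sub_birkhoffAverage' ℝ (isBounded_iff_forall_norm_le.2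
      ⟨C, Set.forall_mem_range.2 hC⟩) S ω)

lemma liminf_birkhoffAverage_apply (hC : ∀ ω, |f ω| ≤ C) (ω : Ω) :
    liminf (birkhoffAverage ℝ S f · (S ω)) atTop = liminf (birkhoffAverage ℝ S f · ω) atTop :=
  liminf_eq_liminf_of_tendsto_sub (abs_birkhoffAverage_le hC · _) (abs_birkhoffAverage_le hC · _)
    (tendsto_birkhoffAverage_apply_sub_birkhoffAverage' ℝ (isBounded_iff_forall_norm_le.2
      ⟨C, Set.forall_mem_range.2 hC⟩) S ω)

variable [MeasurableSpace Ω] {ν : Measure Ω} [IsFiniteMeasure ν]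

lemma mul_measureReal_le_integral_of_frequently_lt_birkhoffAverage
    (hS : MeasurePreserving S ν ν) (hf : Measurable f) (hfi : Integrable f ν) {b : ℝ}
    (h : ∀ᵐ ω ∂ν, ∃ᶠ n in atTop, b < birkhoffAverage ℝ S f n ω) :
    b * ν.real Set.univ ≤ ∫ ω, f ω ∂ν := by
  have hsum : ∀ n ω, birkhoffSum S (fun ω => f ω - b) n ω = birkhoffSum S f n ω - n * b := by
    intro n ω
    simp [birkhoffSum, Finset.sum_sub_distrib]
  have hnonneg := integral_nonneg_of_ae_exists_birkhoffSum_pos (f := fun ω => f ω - b) hS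
    (hf.sub measurable_const) (hfi.sub (integrable_const b)) <| h.mono fun ω hω => by
      obtain ⟨n, hb, hn⟩ := (hω.and_eventually (eventually_gt_atTop 0)).exists
      rw [birkhoffAverage, smul_eq_mul, lt_inv_mul_iff₀ (by positivity)] at hb
      exact ⟨n, by rw [hsum]; linarith⟩
  rw [integral_sub hfi (integrable_const b), integral_const, smul_eq_mul] at hnonneg
  linarith

lemma measure_liminf_lt_lt_limsup_birkhoffAverage (hS : MeasurePreserving S ν ν)
    (hf : Measurable f) (hC : ∀ ω, |f ω| ≤ C) {a b : ℝ} (hab : a < b) :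
    ν {ω | liminf (birkhoffAverage ℝ S f · ω) atTop < a ∧
      b < limsup (birkhoffAverage ℝ S f · ω) atTop} = 0 := by
  set E := {ω | liminf (birkhoffAverage ℝ S f · ω) atTop < a ∧
      b < limsup (birkhoffAverage ℝ S f · ω) atTop}
  have hbdd := abs_birkhoffAverage_le (S := S) hC
  have hmeas : ∀ n, Measurable (birkhoffAverage ℝ S f n) := fun n =>
    (Finset.measurable_sum (Finset.range n) fun k _ =>
      hf.comp (hS.measurable.iterate k)).const_smul ((n : ℝ)⁻¹)
  have hEm : MeasurableSet E := (measurableSet_lt (.liminf hmeas) measurable_const).inter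
    (measurableSet_lt measurable_const (.limsup hmeas))
  have hSE : S ⁻¹' E = E := by
    ext ω
    simp [E, limsup_birkhoffAverage_apply hC, liminf_birkhoffAverage_apply hC]
  -- `E` is `S`-invariant, so the maximal inequality applies to `ν` restricted to `E`
  have hSE' : MeasurePreserving S (ν.restrict E) (ν.restrict E) := by
    simpa only [hSE] using hS.restrict_preimage hEm
  have hfi : Integrable f ν := .of_bound hf.aestronglyMeasurable C
    (ae_of_all _ fun ω => (Real.norm_eq_abs _).trans_le (hC ω))
  have hb : b * ν.real E ≤ ∫ ω in E, f ω ∂ν := by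
    simpa using mul_measureReal_le_integral_of_frequently_lt_birkhoffAverage hSE' hf
      hfi.restrict <| (ae_restrict_mem hEm).mono fun ω hω => frequently_lt_of_lt_limsup
        (isBoundedUnder_ge_of_abs_le (hbdd · ω)).isCoboundedUnder_le hω.2
  have ha : -a * ν.real E ≤ ∫ ω in E, -f ω ∂ν := by
    simpa using mul_measureReal_le_integral_of_frequently_lt_birkhoffAverage (b := -a) hSE'
      hf.neg hfi.neg.restrict <| (ae_restrict_mem hEm).mono fun ω hω => by
        simpa [birkhoffAverage_neg] using frequently_lt_of_liminf_lt
          (isBoundedUnder_le_of_abs_le (hbdd · ω)).isCoboundedUnder_ge hω.1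
  rw [integral_neg] at ha
  have : ν.real E = 0 := by nlinarith [measureReal_nonneg (μ := ν) (s := E)]
  simpa [measureReal_eq_zero_iff] using this

theorem ae_tendsto_birkhoffAverage (hS : MeasurePreserving S ν ν) (hf : Measurable f)
    (hC : ∀ ω, |f ω| ≤ C) :
    ∀ᵐ ω ∂ν, ∃ L, Tendsto (birkhoffAverage ℝ S f · ω) atTop (𝓝 L) := by
  have hgood : ∀ᵐ ω ∂ν, ∀ q : ℚ × ℚ, (q.1 : ℝ) < q.2 →
      ¬ (liminf (birkhoffAverage ℝ S f · ω) atTop < q.1 ∧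
        (q.2 : ℝ) < limsup (birkhoffAverage ℝ S f · ω) atTop) := by
    refine ae_all_iff.2 fun q => ?_
    by_cases hq : (q.1 : ℝ) < q.2
    · exact (measure_eq_zero_iff_ae_notMem.1
        (measure_liminf_lt_lt_limsup_birkhoffAverage hS hf hC hq)).mono fun ω hω _ => hω
    · exact ae_of_all _ fun ω h => absurd h hq
  filter_upwards [hgood] with ω hω
  have hbdd := (abs_birkhoffAverage_le (S := S) hC · ω)
  have hle :
      liminf (birkhoffAverage ℝ S f · ω) atTop ≤ limsup (birkhoffAverage ℝ S f · ω) atTop :=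
    liminf_le_limsup (isBoundedUnder_le_of_abs_le hbdd) (isBoundedUnder_ge_of_abs_le hbdd)
  refine ⟨_, tendsto_of_liminf_eq_limsup (hle.antisymm ?_) rfl
    (isBoundedUnder_le_of_abs_le hbdd) (isBoundedUnder_ge_of_abs_le hbdd)⟩
  by_contra! hlt
  obtain ⟨q, hq₁, hq₂⟩ := exists_rat_btwn hlt
  obtain ⟨r, hr₁, hr₂⟩ := exists_rat_btwn hq₂
  exact hω (q, r) hr₁ ⟨hq₁, hr₂⟩

end PointwiseErgodic

lemma H_pos {n : ℕ} (hn : 0 < n) : 0 < H n :=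
  Finset.sum_pos (fun k _ => by positivity) (Finset.nonempty_range_iff.2 hn.ne')

lemma tendsto_H_atTop : Tendsto H atTop atTop :=
  Real.tendsto_sum_range_one_div_nat_succ_atTop

noncomputable def logAverage (a : ℕ → ℝ) (n : ℕ) : ℝ :=
  (1 / H n) * ∑ k ∈ Finset.range n, (1 / (k + 1 : ℝ)) * a k

lemma logAverage_sub_const (a : ℕ → ℝ) (L : ℝ) {n : ℕ} (hn : 0 < n) :
    logAverage (fun k => a k - L) n = logAverage a n - L := by
  have hH : ∑ k ∈ Finset.range n, 1 / (k + 1 : ℝ) = H n := rfl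
  have := (H_pos hn).ne'
  simp only [logAverage, mul_sub, Finset.sum_sub_distrib, ← Finset.sum_mul, hH]
  field_simp

lemma tendsto_logAverage {a : ℕ → ℝ} {L : ℝ} (ha : Tendsto a atTop (𝓝 L)) :
    Tendsto (logAverage a) atTop (𝓝 L) := by
  have hsmall : (fun k : ℕ => (1 / (k + 1 : ℝ)) * (a k - L)) =o[atTop]
      fun k : ℕ => 1 / (k + 1 : ℝ) := by
    simpa using (Asymptotics.isBigO_refl (fun k : ℕ => 1 / (k + 1 : ℝ)) atTop).mul_isLittleO
      ((Asymptotics.isLittleO_one_iff ℝ).2 (tendsto_sub_nhds_zero_iff.2 ha))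
  have h0 := (Asymptotics.isLittleO_iff_tendsto' ?_).1
    (hsmall.sum_range (fun k => by positivity) tendsto_H_atTop)
  · refine tendsto_sub_nhds_zero_iff.1 (h0.congr' ?_)
    filter_upwards [eventually_gt_atTop 0] with n hn
    rw [← logAverage_sub_const a L hn, logAverage, one_div_mul_eq_div]
    rfl
  · filter_upwards [eventually_gt_atTop 0] with n hn h
    exact absurd h (H_pos hn).ne'

/-- Abel summation against the Cesàro means. -/
lemma sum_div_succ_eq_cesaro (a : ℕ → ℝ) (n : ℕ) :
    ∑ k ∈ Finset.range n, (1 / (k + 1 : ℝ)) * a k =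
      (n : ℝ)⁻¹ * ∑ k ∈ Finset.range n, a k +
        ∑ j ∈ Finset.range n, (1 / (j + 1 : ℝ)) * ((j : ℝ)⁻¹ * ∑ k ∈ Finset.range j, a k) := by
  induction n with
  | zero => simp
  | succ n ih =>
    rw [Finset.sum_range_succ, ih]
    simp only [Finset.sum_range_succ]
    rcases n.eq_zero_or_pos with rfl | hn
    · simp
    · have : (n : ℝ) ≠ 0 := by positivity
      push_cast
      field_simp
      ring

lemma tendsto_logAverage_of_tendsto_cesaro {a : ℕ → ℝ} {L : ℝ}
    (h : Tendsto (fun n : ℕ => (n : ℝ)⁻¹ * ∑ k ∈ Finset.range n, a k) atTop (𝓝 L)) :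
    Tendsto (logAverage a) atTop (𝓝 L) := by
  have hH : Tendsto (fun n => 1 / H n) atTop (𝓝 0) :=
    tendsto_const_nhds.div_atTop tendsto_H_atTop
  have := (hH.mul h).add (tendsto_logAverage h)
  rw [zero_mul, zero_add] at this
  refine this.congr fun n => ?_
  rw [logAverage, logAverage, sum_div_succ_eq_cesaro a n, mul_add]

def IsSensitive {X : Type*} [MeasurableSpace X] (μ : Measure X) (ψ : X → X → ℝ) : Prop :=
  ∃ ε > (0 : ℝ), ∀ B : Set X, MeasurableSet B → μ B ≠ 0 → ∃ x ∈ B, ∃ y ∈ B, ε ≤ ψ x y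

namespace IsSensitive

variable {X : Type*} [MeasurableSpace X] {μ : Measure X} {ψ φ : X → X → ℝ}

/-- Choose `z ∈ B` with `ψ z ≤ φ z` a.e., discard the exceptional null set from `B`, and compare
an `ε`-separated pair `x, y` for `ψ` in what is left with `z`. -/
lemma of_ae_le (hsymm : ∀ x y, ψ x y = ψ y x) (htri : ∀ x y z, ψ x z ≤ ψ x y + ψ y z)
    (hle : ∀ᵐ x ∂μ, ∀ᵐ y ∂μ, ψ x y ≤ φ x y) (h : IsSensitive μ ψ) : IsSensitive μ φ := by
  obtain ⟨ε, hε, hψ⟩ := h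
  refine ⟨ε / 2, half_pos hε, fun B hB hμB => ?_⟩
  obtain ⟨z, hz, hzB⟩ := (hle.and_frequently (frequently_ae_mem_iff.2 hμB)).exists
  obtain ⟨N, hNsub, hNm, hN0⟩ := exists_measurable_superset_of_null (ae_iff.1 hz)
  have hgood : ∀ w ∉ N, ψ z w ≤ φ z w := fun w hw => not_not.1 fun h => hw (hNsub h)
  obtain ⟨x, hx, y, hy, hxy⟩ :=
    hψ (B \ N) (hB.diff hNm) (by rwa [measure_sdiff_null hN0])
  have := htri x z y
  rw [hsymm x z] at this
  by_contra! hφ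
  linarith [hgood x hx.2, hgood y hy.2, hφ z hzB x hx.1, hφ z hzB y hy.1]

lemma congr_ae (hψs : ∀ x y, ψ x y = ψ y x) (hψt : ∀ x y z, ψ x z ≤ ψ x y + ψ y z)
    (hφs : ∀ x y, φ x y = φ y x) (hφt : ∀ x y z, φ x z ≤ φ x y + φ y z)
    (h : ∀ᵐ x ∂μ, ∀ᵐ y ∂μ, ψ x y = φ x y) : IsSensitive μ ψ ↔ IsSensitive μ φ :=
  ⟨of_ae_le hψs hψt (h.mono fun _ hx => hx.mono fun _ => le_of_eq),
    of_ae_le hφs hφt (h.mono fun _ hx => hx.mono fun _ => ge_of_eq)⟩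

end IsSensitive

section OrbitMeanDist

variable {X : Type*} [PseudoMetricSpace X]

noncomputable def orbitMeanDist (w : ℕ → ℕ → ℝ) (T : X → X) (x y : X) : ℝ :=
  limsup (fun n => ∑ k ∈ Finset.range n, w n k * dist (T^[k] x) (T^[k] y)) atTop

lemma orbitMeanDist_comm (w : ℕ → ℕ → ℝ) (T : X → X) (x y : X) :
    orbitMeanDist w T x y = orbitMeanDist w T y x := by
  simp only [orbitMeanDist, dist_comm]

variable {w : ℕ → ℕ → ℝ}

lemma abs_sum_weight_mul_dist_le [BoundedSpace X] (hw₀ : ∀ n k, 0 ≤ w n k)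
    (hw₁ : ∀ n, ∑ k ∈ Finset.range n, w n k ≤ 1) (T : X → X) (x y : X) (n : ℕ) :
    |∑ k ∈ Finset.range n, w n k * dist (T^[k] x) (T^[k] y)| ≤
      Metric.diam (Set.univ : Set X) := by
  have hD : ∀ k, dist (T^[k] x) (T^[k] y) ≤ Metric.diam (Set.univ : Set X) := fun k =>
    Metric.dist_le_diam_of_mem BoundedSpace.bounded_univ trivial trivial
  rw [abs_of_nonneg (Finset.sum_nonneg fun k _ => mul_nonneg (hw₀ n k) dist_nonneg)]
  calc ∑ k ∈ Finset.range n, w n k * dist (T^[k] x) (T^[k] y)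
      ≤ ∑ k ∈ Finset.range n, w n k * Metric.diam (Set.univ : Set X) :=
        Finset.sum_le_sum fun k _ => mul_le_mul_of_nonneg_left (hD k) (hw₀ n k)
    _ ≤ Metric.diam (Set.univ : Set X) := by
        rw [← Finset.sum_mul]
        exact mul_le_of_le_one_left Metric.diam_nonneg (hw₁ n)

lemma orbitMeanDist_triangle [BoundedSpace X] (hw₀ : ∀ n k, 0 ≤ w n k)
    (hw₁ : ∀ n, ∑ k ∈ Finset.range n, w n k ≤ 1) (T : X → X) (x y z : X) :
    orbitMeanDist w T x z ≤ orbitMeanDist w T x y + orbitMeanDist w T y z := by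
  have hb := abs_sum_weight_mul_dist_le hw₀ hw₁ T
  calc orbitMeanDist w T x z
      ≤ limsup ((fun n => ∑ k ∈ Finset.range n, w n k * dist (T^[k] x) (T^[k] y)) +
          fun n => ∑ k ∈ Finset.range n, w n k * dist (T^[k] y) (T^[k] z)) atTop := by
        refine limsup_le_limsup (Eventually.of_forall fun n => ?_)
          (isBoundedUnder_ge_of_abs_le (hb x z)).isCoboundedUnder_le
          (isBoundedUnder_le_of_abs_le fun n =>
            (abs_add_le _ _).trans (add_le_add (hb x y n) (hb y z n)))
        simp only [Pi.add_apply, ← Finset.sum_add_distrib, ← mul_add]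
        exact Finset.sum_le_sum fun k _ =>
          mul_le_mul_of_nonneg_left (dist_triangle _ _ _) (hw₀ n k)
    _ ≤ orbitMeanDist w T x y + orbitMeanDist w T y z :=
        limsup_add_le (isBoundedUnder_ge_of_abs_le (hb x y))
          (isBoundedUnder_le_of_abs_le (hb x y))
          (isBoundedUnder_ge_of_abs_le (hb y z)).isCoboundedUnder_le
          (isBoundedUnder_le_of_abs_le (hb y z))

noncomputable def cesaroWeight (n _k : ℕ) : ℝ := 1 / n

noncomputable def logWeight (n k : ℕ) : ℝ := 1 / H n * (1 / (k + 1))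

lemma cesaroWeight_nonneg (n k : ℕ) : 0 ≤ cesaroWeight n k := by
  unfold cesaroWeight
  positivity

lemma sum_cesaroWeight_le_one (n : ℕ) : ∑ k ∈ Finset.range n, cesaroWeight n k ≤ 1 := by
  simp only [cesaroWeight, Finset.sum_const, Finset.card_range, nsmul_eq_mul, mul_one_div]
  exact div_self_le_one _

lemma logWeight_nonneg (n k : ℕ) : 0 ≤ logWeight n k :=
  mul_nonneg (one_div_nonneg.2 (Finset.sum_nonneg fun _ _ => by positivity)) (by positivity)

lemma sum_logWeight_le_one (n : ℕ) : ∑ k ∈ Finset.range n, logWeight n k ≤ 1 := by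
  unfold logWeight
  rw [← Finset.mul_sum, one_div_mul_eq_div]
  exact div_self_le_one _

end OrbitMeanDist

section MeanSensitivity

variable {X : Type*} [MetricSpace X] [MeasurableSpace X] {T : X → X}

lemma IsInvariantMeasure.measurePreserving {μ : ProbabilityMeasure X}
    (h : IsInvariantMeasure T μ) (hT : Measurable T) : MeasurePreserving T μ μ := by
  refine ⟨hT, Measure.ext fun s hs => ?_⟩
  rw [Measure.map_apply hT hs, ← ProbabilityMeasure.ennreal_coeFn_eq_coeFn_toMeasure,
    ← ProbabilityMeasure.ennreal_coeFn_eq_coeFn_toMeasure, h s hs]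

lemma muMeanSensitive_iff_isSensitive (μ : ProbabilityMeasure X) :
    MuMeanSensitive T μ ↔ IsSensitive μ (orbitMeanDist cesaroWeight T) := by
  simp only [MuMeanSensitive, IsSensitive, orbitMeanDist, cesaroWeight, Finset.mul_sum,
    pos_iff_ne_zero, ne_eq, ProbabilityMeasure.null_iff_toMeasure_null]

lemma muLogMeanSensitive_iff_isSensitive (μ : ProbabilityMeasure X) :
    MuLogMeanSensitive T μ ↔ IsSensitive μ (orbitMeanDist logWeight T) := by
  simp only [MuLogMeanSensitive, IsSensitive, orbitMeanDist, logWeight, Finset.mul_sum, mul_assoc,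
    pos_iff_ne_zero, ne_eq, ProbabilityMeasure.null_iff_toMeasure_null]

lemma ae_ae_orbitMeanDist_cesaroWeight_eq_logWeight [SecondCountableTopology X]
    [OpensMeasurableSpace X] [BoundedSpace X] {μ : Measure X} [IsFiniteMeasure μ]
    (hT : MeasurePreserving T μ μ) :
    ∀ᵐ x ∂μ, ∀ᵐ y ∂μ, orbitMeanDist cesaroWeight T x y = orbitMeanDist logWeight T x y := by
  have hC : ∀ p : X × X, |dist p.1 p.2| ≤ Metric.diam (Set.univ : Set X) := fun p => by
    rw [abs_of_nonneg dist_nonneg]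
    exact Metric.dist_le_diam_of_mem BoundedSpace.bounded_univ trivial trivial
  have hprod : ∀ᵐ p ∂μ.prod μ,
      orbitMeanDist cesaroWeight T p.1 p.2 = orbitMeanDist logWeight T p.1 p.2 := by
    filter_upwards [ae_tendsto_birkhoffAverage (hT.prod hT) measurable_dist hC]
      with ⟨x, y⟩ ⟨L, hL⟩
    have hcesaro : Tendsto (fun n : ℕ => (n : ℝ)⁻¹ * ∑ k ∈ Finset.range n,
        dist (T^[k] x) (T^[k] y)) atTop (𝓝 L) := by
      simpa [birkhoffAverage, birkhoffSum, Prod.map_iterate] using hL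
    have hlog := (tendsto_logAverage_of_tendsto_cesaro hcesaro).limsup_eq
    simp only [← one_div] at hcesaro
    simp only [orbitMeanDist, cesaroWeight, logWeight, mul_assoc, ← Finset.mul_sum]
    exact hcesaro.limsup_eq.trans hlog.symm
  exact Measure.ae_ae_of_ae_prod hprod

end MeanSensitivity

theorem muMeanSensitive_iff_muLogMeanSensitive_general
    {X : Type*} [MetricSpace X] [CompactSpace X]
    [MeasurableSpace X] [BorelSpace X]
    (T : X → X) (hT : Continuous T)
    (μ : ProbabilityMeasure X) (hμ : IsErgodicMeasure T μ) :
    MuMeanSensitive T μ ↔ MuLogMeanSensitive T μ := by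
  rw [muMeanSensitive_iff_isSensitive, muLogMeanSensitive_iff_isSensitive]
  exact IsSensitive.congr_ae (orbitMeanDist_comm _ T)
    (orbitMeanDist_triangle cesaroWeight_nonneg sum_cesaroWeight_le_one T)
    (orbitMeanDist_comm _ T) (orbitMeanDist_triangle logWeight_nonneg sum_logWeight_le_one T)
    (ae_ae_orbitMeanDist_cesaroWeight_eq_logWeight (hμ.1.measurePreserving hT.measurable))

/-- For an ergodic `T`-invariant Borel probability measure `μ`, the system `(X,T)` is
`μ`-mean sensitive if and only if it is `μ`-logarithmically mean sensitive. -/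
theorem muMeanSensitive_iff_muLogMeanSensitive
    {X : Type*} [MetricSpace X] [CompactSpace X] [Nonempty X]
    [MeasurableSpace X] [BorelSpace X]
    (T : X → X) (hT : Continuous T)
    (μ : ProbabilityMeasure X) (hμ : IsErgodicMeasure T μ) :
    MuMeanSensitive T μ ↔ MuLogMeanSensitive T μ :=
  muMeanSensitive_iff_muLogMeanSensitive_general T hT μ hμ
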